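/- arXiv:1409.7633 — 2 statements merged into one kernel-verified Lean document; each statement's English description precedes it below -/
import Mathlib

section
/- Let 𝔽_q have characteristic p, let f ∈ 𝔽_q[t][x], and define F(y_0,…,y_{p−1}) = f(∑_{j=0}^{p−1} t^j y_j^p) ∈ 𝔽_q[t][y_0,…,y_{p−1}]. For n ≥ 1 let Q = {a ∈ 𝔽_q[t]^p : deg a_i ≤ ⌊n/p⌋ for all 0 ≤ i < p, and there exists a prime polynomial P with deg P > n/2 dividing both F(a) and (∂F/∂t)(a)}. Then #{a ∈ M_n(q) : there exists a prime polynomial P with deg P > n/2 and P² ∣ f(a)} ≤ |Q|. -/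
open Polynomial

noncomputable section

/-- A prime polynomial: monic and irreducible. -/
def IsPrimePoly {F : Type*} [Field F] (P : Polynomial F) : Prop :=
  P.Monic ∧ Irreducible P

/-- `bigF p f` : the polynomial `F(y_0,…,y_{p-1}) = f(∑_{j<p} t^j·y_j^p)` in
`𝔽_q[t][y_0,…,y_{p-1}]`. -/
def bigF {F : Type*} [Field F] (p : ℕ) (f : Polynomial (Polynomial F)) :
    MvPolynomial (Fin p) (Polynomial F) :=
  Polynomial.eval₂ MvPolynomial.C
    (∑ j : Fin p, MvPolynomial.C (Polynomial.X ^ (j : ℕ)) * MvPolynomial.X j ^ p) f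

/-- The partial derivative with respect to `t` of a polynomial in
`𝔽_q[t][y_0,…,y_{p-1}]`, i.e. the coefficientwise `t`-derivative. -/
def pderivT {F : Type*} [Field F] {σ : Type*} (G : MvPolynomial σ (Polynomial F)) :
    MvPolynomial σ (Polynomial F) :=
  ∑ m ∈ G.support, MvPolynomial.monomial m (Polynomial.derivative (MvPolynomial.coeff m G))

/-!
Over a perfect field of characteristic `p`, a polynomial `a` of degree `n` is
`∑_{j<p} t^j b_j^p` with `deg b_j ≤ n/p`: `b_j` collects the `p`-th roots of the coefficients of
`a` at the exponents `≡ j (mod p)`. Then `F(b) = f(a)`, and since every `∂F/∂y_i` vanishes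
(`y_i` occurs only as `y_i^p`), the chain rule gives `(∂F/∂t)(b) = f(a)'`. A prime `P` with
`P² ∣ f(a)` divides `f(a)'`, so `a ↦ b` is an injection of the left-hand set into `Q`.
-/

theorem Polynomial.finite_setOf_natDegree_le (R : Type*) [Semiring R] [Finite R] (d : ℕ) :
    {b : R[X] | b.natDegree ≤ d}.Finite := by
  have : Finite (degreeLT R (d + 1)) := .of_equiv _ (degreeLTEquiv R (d + 1)).toEquiv.symm
  refine (degreeLT R (d + 1) : Set R[X]).toFinite.subset fun b hb => ?_
  rw [SetLike.mem_coe, mem_degreeLT]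
  exact (degree_le_natDegree.trans (WithBot.coe_le_coe.mpr hb)).trans_lt
    (WithBot.coe_lt_coe.mpr d.lt_succ_self)

section pSection

variable {R : Type*} [CommSemiring R] (p : ℕ)

def pSection (a : R[X]) (j : ℕ) : R[X] :=
  ∑ m ∈ a.support with m % p = j, monomial (m / p) (a.coeff m)

theorem natDegree_pSection_le (a : R[X]) (j : ℕ) : (pSection p a j).natDegree ≤ a.natDegree / p :=
  natDegree_sum_le_of_forall_le _ _ fun m hm =>
    (natDegree_monomial_le _).trans
      (Nat.div_le_div_right (le_natDegree_of_mem_supp m (Finset.mem_filter.mp hm).1))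

theorem sum_X_pow_mul_expand_pSection (hp : 0 < p) (a : R[X]) :
    ∑ j : Fin p, X ^ (j : ℕ) * expand R p (pSection p a j) = a := by
  rw [Fin.sum_univ_eq_sum_range (fun j => X ^ j * expand R p (pSection p a j))]
  conv_rhs => rw [a.as_sum_support,
    ← Finset.sum_fiberwise_of_maps_to (t := Finset.range p) (g := (· % p))
      (fun m _ => Finset.mem_range.mpr (Nat.mod_lt m hp))]
  refine Finset.sum_congr rfl fun j _ => ?_
  simp only [pSection, map_sum, expand_monomial, Finset.mul_sum, X_pow_mul_monomial]
  refine Finset.sum_congr rfl fun m hm => ?_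
  rw [← (Finset.mem_filter.mp hm).2, Nat.div_add_mod']

end pSection

section FrobeniusRoot

variable {K : Type*} [CommSemiring K] (p : ℕ) [ExpChar K p] [PerfectRing K p]

def pthRootComponents (a : K[X]) (j : Fin p) : K[X] :=
  (pSection p a j).map (frobeniusEquiv K p).symm

theorem natDegree_pthRootComponents_le (a : K[X]) (j : Fin p) :
    (pthRootComponents p a j).natDegree ≤ a.natDegree / p :=
  natDegree_map_le.trans (natDegree_pSection_le p a j)

theorem sum_X_pow_mul_pthRootComponents_pow (a : K[X]) :
    ∑ j : Fin p, X ^ (j : ℕ) * pthRootComponents p a j ^ p = a := by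
  simp only [pthRootComponents, ← polynomial_expand_eq]
  exact sum_X_pow_mul_expand_pSection p (expChar_pos K p) a

end FrobeniusRoot

section pderivT

variable {F : Type*} [Field F] {σ : Type*}

theorem coeff_pderivT (G : MvPolynomial σ F[X]) (m : σ →₀ ℕ) :
    (pderivT G).coeff m = derivative (G.coeff m) := by
  classical
  rw [pderivT, MvPolynomial.coeff_sum]
  simp only [MvPolynomial.coeff_monomial, Finset.sum_ite_eq', MvPolynomial.mem_support_iff]
  split_ifs with h
  · rfl
  · rw [not_not.mp h, derivative_zero]

theorem pderivT_add (G H : MvPolynomial σ F[X]) : pderivT (G + H) = pderivT G + pderivT H := by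
  ext m
  simp only [coeff_pderivT, MvPolynomial.coeff_add, derivative_add]

theorem pderivT_C (c : F[X]) : pderivT (MvPolynomial.C c : MvPolynomial σ F[X]) =
    MvPolynomial.C (derivative c) := by
  classical
  ext m
  simp only [coeff_pderivT, MvPolynomial.coeff_C]
  split_ifs <;> simp

theorem pderivT_mul_X (G : MvPolynomial σ F[X]) (i : σ) :
    pderivT (G * MvPolynomial.X i) = pderivT G * MvPolynomial.X i := by
  classical
  ext m
  simp only [coeff_pderivT, MvPolynomial.coeff_mul_X']
  split_ifs <;> simp

theorem derivative_eval_eq_eval_pderivT_add [Fintype σ] (v : σ → F[X]) (G : MvPolynomial σ F[X]) :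
    derivative (MvPolynomial.eval v G) =
      MvPolynomial.eval v (pderivT G) +
        ∑ i, MvPolynomial.eval v (MvPolynomial.pderiv i G) * derivative (v i) := by
  classical
  induction G using MvPolynomial.induction_on with
  | C c => simp [pderivT_C]
  | add G H hG hH =>
    simp only [map_add, hG, hH, pderivT_add, add_mul, Finset.sum_add_distrib]
    ring
  | mul_X G i hG =>
    have hX : ∑ j, MvPolynomial.eval v G * MvPolynomial.eval v
        (MvPolynomial.pderiv j (MvPolynomial.X i)) * derivative (v j) =
          MvPolynomial.eval v G * derivative (v i) := by
      simp [MvPolynomial.pderiv_X, Pi.single_apply]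
    simp only [map_mul, MvPolynomial.eval_X, derivative_mul, hG, pderivT_mul_X,
      MvPolynomial.pderiv_mul, map_add, add_mul, Finset.sum_add_distrib, hX]
    simp only [mul_right_comm _ (v i), ← Finset.sum_mul]
    ring

end pderivT

section bigF

variable {F : Type*} [Field F] (p : ℕ) (f : F[X][X])

theorem eval_bigF (v : Fin p → F[X]) :
    MvPolynomial.eval v (bigF p f) = f.eval (∑ j : Fin p, X ^ (j : ℕ) * v j ^ p) := by
  rw [bigF, hom_eval₂]
  congr 1
  · ext <;> simp
  · simp

theorem pderiv_bigF [CharP F p] (i : Fin p) : MvPolynomial.pderiv i (bigF p f) = 0 := by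
  have hsum : MvPolynomial.pderiv i
      (∑ j : Fin p, MvPolynomial.C (X ^ (j : ℕ)) * MvPolynomial.X j ^ p :
        MvPolynomial (Fin p) F[X]) = 0 := by
    simp
  rw [bigF, ← MvPolynomial.algebraMap_eq, ← aeval_def, Derivation.map_aeval,
    MvPolynomial.algebraMap_eq, hsum, smul_zero]

theorem eval_pderivT_bigF [CharP F p] (v : Fin p → F[X]) :
    MvPolynomial.eval v (pderivT (bigF p f)) =
      derivative (f.eval (∑ j : Fin p, X ^ (j : ℕ) * v j ^ p)) := by
  rw [← eval_bigF, derivative_eval_eq_eval_pderivT_add]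
  simp [pderiv_bigF]

end bigF

theorem large_primes_count_le_Q_general {F : Type*} [Field F] [Fintype F] (p : ℕ) [CharP F p]
    (f : Polynomial (Polynomial F)) (n : ℕ) :
    {a : Polynomial F | a.Monic ∧ a.natDegree = n ∧
        ∃ P : Polynomial F, IsPrimePoly P ∧ n < 2 * P.natDegree ∧ P ^ 2 ∣ f.eval a}.ncard ≤
      {v : Fin p → Polynomial F | (∀ i, (v i).natDegree ≤ n / p) ∧
        ∃ P : Polynomial F, IsPrimePoly P ∧ n < 2 * P.natDegree ∧
          P ∣ MvPolynomial.eval v (bigF p f) ∧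
          P ∣ MvPolynomial.eval v (pderivT (bigF p f))}.ncard := by
  have : Fact p.Prime := ⟨CharP.char_is_prime F p⟩
  refine Set.ncard_le_ncard_of_injOn (pthRootComponents p) ?_ ?_ ?_
  · rintro a ⟨-, rfl, P, hP, hPdeg, hP2⟩
    have hroot := sum_X_pow_mul_pthRootComponents_pow p a
    refine ⟨natDegree_pthRootComponents_le p a, P, hP, hPdeg, ?_, ?_⟩
    · rw [eval_bigF, hroot]
      exact (dvd_pow_self P two_ne_zero).trans hP2
    · rw [eval_pderivT_bigF, hroot]
      simpa using pow_sub_one_dvd_derivative_of_pow_dvd hP2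
  · intro a _ b _ hab
    rw [← sum_X_pow_mul_pthRootComponents_pow p a, ← sum_X_pow_mul_pthRootComponents_pow p b, hab]
  · exact (Set.Finite.pi fun _ => finite_setOf_natDegree_le F (n / p)).subset
      fun v hv => Set.mem_univ_pi.mpr hv.1

/-- The number of monic `a` of degree `n` with `P² ∣ f(a)` for some prime
`P` of degree `> n/2` is at most the number of tuples `a ∈ 𝔽_q[t]^p` with
`deg a_i ≤ ⌊n/p⌋` for all `i` and some prime `P` of degree `> n/2` dividing both `F(a)` and
`(∂F/∂t)(a)`. -/
theorem large_primes_count_le_Q {F : Type*} [Field F] [Fintype F] (p : ℕ) [CharP F p]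
    (f : Polynomial (Polynomial F)) (n : ℕ) (hn : 1 ≤ n) :
    {a : Polynomial F | a.Monic ∧ a.natDegree = n ∧
        ∃ P : Polynomial F, IsPrimePoly P ∧ n < 2 * P.natDegree ∧ P ^ 2 ∣ f.eval a}.ncard ≤
      {v : Fin p → Polynomial F | (∀ i, (v i).natDegree ≤ n / p) ∧
        ∃ P : Polynomial F, IsPrimePoly P ∧ n < 2 * P.natDegree ∧
          P ∣ MvPolynomial.eval v (bigF p f) ∧
          P ∣ MvPolynomial.eval v (pderivT (bigF p f))}.ncard :=
  large_primes_count_le_Q_general p f n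

end
end

section
/- Let 𝔽_q have characteristic p, let N ≥ 1 be an integer, let f ∈ 𝔽_q[t][x_1,…,x_N] and g ∈ 𝔽_q[t][x_1,…,x_{N−1}] be polynomials, and let f_1 ∈ 𝔽_q[t][x_1,…,x_{N−1}] be the coefficient of the highest power of x_N in f when f is viewed as a polynomial in x_N. Define S(n) = {a ∈ 𝔽_q[t]^N : deg a_i ≤ ⌊n/p⌋ for all i, and there exists a prime polynomial P with deg P > n/2 such that P ∣ f(a), P ∣ g(a_1,…,a_{N−1}), P ∤ f_1(a_1,…,a_{N−1}), and g(a_1,…,a_{N−1}) ≠ 0}. Then there is a constant C depending only on f, g and q such that |S(n)| ≤ C · q^{n(N−1)/p} for all n ≥ 1. -/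
/-!
Fix the tail `b = (a_1, …, a_N)` of a point of `S(n)`, so `g(b) ≠ 0`. The first coordinate `x`
has degree `≤ n / p ≤ n / 2 < deg P`, so it is determined by its residue modulo `P`, and that
residue is a root of `f(X, b) mod P`, a nonzero polynomial (as `P ∤ f₁(b)`) of degree at most
`d = deg_{x_0} f`. The primes of degree `> n / 2` dividing `g(b)` number at most
`deg g(b) / (n / p + 1)`, which is bounded since `deg g(b)` grows linearly in `n / p`. So every
fibre of `a ↦ b` has `O(1)` points, and there are at most `q^{N(n/p + 1)}` tails.
-/

open Polynomial

noncomputable section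

open UniqueFactorizationMonoid

theorem Set.ncard_le_mul_ncard_of_mapsTo {α β : Type*} {s : Set α} {t : Set β} {f : α → β}
    (hf : Set.MapsTo f s t) (ht : t.Finite) {k : ℕ}
    (hk : ∀ b ∈ t, (s ∩ f ⁻¹' {b}).ncard ≤ k) : s.ncard ≤ k * t.ncard := by
  classical
  obtain hs | hs := s.finite_or_infinite
  · rw [Set.ncard_eq_toFinset_card s hs, Set.ncard_eq_toFinset_card t ht]
    refine Finset.card_le_mul_card_image_of_maps_to
      (fun a ha => by simpa using hf (by simpa using ha)) k fun b hb => ?_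
    convert hk b (by simpa using hb)
    rw [← Set.ncard_coe_finset]
    congr 1
    ext
    simp
  · simp [hs.ncard]

namespace Polynomial

section Semiring

variable {R : Type*} [Semiring R]

theorem injOn_coeff_of_natDegree_le (m : ℕ) :
    Set.InjOn (fun x : R[X] => fun j : Fin (m + 1) => x.coeff j) {x | x.natDegree ≤ m} := by
  intro x hx y hy hxy
  ext k
  rcases le_or_gt k m with hk | hk
  · exact congrFun hxy ⟨k, Nat.lt_succ_of_le hk⟩
  · rw [coeff_eq_zero_of_natDegree_lt (lt_of_le_of_lt hx hk),
      coeff_eq_zero_of_natDegree_lt (lt_of_le_of_lt hy hk)]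

theorem finite_setOf_natDegree_le_s16 [Finite R] (m : ℕ) : {x : R[X] | x.natDegree ≤ m}.Finite :=
  Set.Finite.of_finite_image (Set.toFinite _) (injOn_coeff_of_natDegree_le m)

theorem ncard_setOf_forall_natDegree_le_le [Fintype R] {ι : Type*} [Fintype ι] (m : ℕ) :
    {a : ι → R[X] | ∀ i, (a i).natDegree ≤ m}.ncard ≤
      Fintype.card R ^ ((m + 1) * Fintype.card ι) := by
  have hinj : Set.InjOn (fun (a : ι → R[X]) (i : ι) (j : Fin (m + 1)) => (a i).coeff j)
      {a | ∀ i, (a i).natDegree ≤ m} := by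
    intro a ha b hb hab
    funext i
    exact injOn_coeff_of_natDegree_le m (ha i) (hb i) (congrFun hab i)
  rw [← hinj.ncard_image]
  refine (Set.ncard_le_card _).trans_eq ?_
  simp [Nat.card_fun, ← pow_mul, mul_comm]

end Semiring

section Field

variable {F : Type*} [Field F]

theorem injOn_adjoinRoot_mk (P : F[X]) :
    Set.InjOn (AdjoinRoot.mk P) {x | x.natDegree < P.natDegree} := by
  intro x hx y hy hxy
  by_contra hne
  have hdeg := natDegree_le_of_dvd (AdjoinRoot.mk_eq_mk.1 hxy) (sub_ne_zero_of_ne hne)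
  have := natDegree_sub_le x y
  simp only [Set.mem_ofPred_eq] at hx hy
  omega

theorem encard_setOf_dvd_eval_le {P : F[X]} (hP : Irreducible P) {h : F[X][X]} {d M : ℕ}
    (hd : h.natDegree ≤ d) (hc : ¬ P ∣ h.coeff d) (hM : M < P.natDegree) :
    {x : F[X] | x.natDegree ≤ M ∧ P ∣ h.eval x}.encard ≤ d := by
  have := Fact.mk hP
  set H := h.map (AdjoinRoot.mk P)
  have hH : H ≠ 0 := fun h0 => hc <| by
    simpa [H, AdjoinRoot.mk_eq_zero] using congrArg (coeff · d) h0
  have hmaps : Set.MapsTo (AdjoinRoot.mk P) {x | x.natDegree ≤ M ∧ P ∣ h.eval x}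
      (H.roots.toFinset : Set (AdjoinRoot P)) := by
    rintro x ⟨-, hx⟩
    simpa [H, mem_roots hH, AdjoinRoot.mk_eq_zero] using hx
  calc _ ≤ (H.roots.toFinset : Set (AdjoinRoot P)).encard :=
        Set.encard_le_encard_of_injOn hmaps
          ((injOn_adjoinRoot_mk P).mono fun x hx => lt_of_le_of_lt hx.1 hM)
    _ = H.roots.toFinset.card := Set.encard_coe_eq_coe_finsetCard _
    _ ≤ d := by
        exact_mod_cast (Multiset.toFinset_card_le _).trans
          ((card_roots' H).trans (natDegree_map_le.trans hd))

variable [DecidableEq F]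

theorem card_filter_normalizedFactors_mul_le {G : F[X]} (hG : G ≠ 0) (M : ℕ) :
    ((normalizedFactors G).toFinset.filter (M < ·.natDegree)).card * (M + 1) ≤ G.natDegree := by
  set T := (normalizedFactors G).toFinset.filter (M < ·.natDegree)
  have hT0 : ∀ P ∈ T, P ≠ 0 := fun P hP =>
    ne_zero_of_mem_normalizedFactors (Multiset.mem_toFinset.1 (Finset.mem_filter.1 hP).1)
  have hdvd : ∏ P ∈ T, P ∣ G :=
    ((Finset.prod_dvd_prod_of_subset _ _ id (Finset.filter_subset _ _)).trans
      (Multiset.toFinset_prod_dvd_prod _)).trans (prod_normalizedFactors hG).dvd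
  calc T.card * (M + 1) ≤ ∑ P ∈ T, P.natDegree := by
        simpa using Finset.card_nsmul_le_sum T natDegree (M + 1)
          fun P hP => (Finset.mem_filter.1 hP).2
    _ = (∏ P ∈ T, P).natDegree := (natDegree_prod _ _ hT0).symm
    _ ≤ G.natDegree := natDegree_le_of_dvd hdvd hG

theorem encard_setOf_exists_prime_dvd_eval_le {G : F[X]} (hG : G ≠ 0) {h : F[X][X]} {d : ℕ}
    (hd : h.natDegree ≤ d) (M : ℕ) :
    {x : F[X] | x.natDegree ≤ M ∧ ∃ P, IsPrimePoly P ∧ M < P.natDegree ∧ P ∣ G ∧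
        ¬ P ∣ h.coeff d ∧ P ∣ h.eval x}.encard ≤
      (((normalizedFactors G).toFinset.filter (M < ·.natDegree)).card * d : ℕ) := by
  classical
  set T := (normalizedFactors G).toFinset.filter (M < ·.natDegree)
  set T' := T.filter (fun P => ¬ P ∣ h.coeff d)
  have hsub : {x : F[X] | x.natDegree ≤ M ∧ ∃ P, IsPrimePoly P ∧ M < P.natDegree ∧ P ∣ G ∧
      ¬ P ∣ h.coeff d ∧ P ∣ h.eval x} ⊆ ⋃ P ∈ T', {x | x.natDegree ≤ M ∧ P ∣ h.eval x} := by
    rintro x ⟨hx, P, ⟨hPm, hPi⟩, hPM, hPG, hPc, hPx⟩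
    have hPG' : P ∈ normalizedFactors G :=
      (Polynomial.mem_normalizedFactors_iff hG).2 ⟨hPi, hPm, hPG⟩
    have hPT : P ∈ T' :=
      Finset.mem_filter.2 ⟨Finset.mem_filter.2 ⟨Multiset.mem_toFinset.2 hPG', hPM⟩, hPc⟩
    exact Set.mem_biUnion hPT ⟨hx, hPx⟩
  have hroots : ∀ P ∈ T', {x : F[X] | x.natDegree ≤ M ∧ P ∣ h.eval x}.encard ≤ d := by
    intro P hP
    obtain ⟨hPT, hPc⟩ := Finset.mem_filter.1 hP
    obtain ⟨hPf, hPM⟩ := Finset.mem_filter.1 hPT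
    exact encard_setOf_dvd_eval_le
      (irreducible_of_normalized_factor P (Multiset.mem_toFinset.1 hPf)) hd hPc hPM
  calc _ ≤ (⋃ P ∈ T', {x : F[X] | x.natDegree ≤ M ∧ P ∣ h.eval x}).encard :=
        Set.encard_le_encard hsub
    _ ≤ ∑ P ∈ T', {x : F[X] | x.natDegree ≤ M ∧ P ∣ h.eval x}.encard :=
        Finset.set_encard_biUnion_le _ _
    _ ≤ T'.card • (d : ℕ∞) := Finset.sum_le_card_nsmul _ _ _ hroots
    _ ≤ (T.card * d : ℕ) := by
        rw [nsmul_eq_mul]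
        push_cast
        exact mul_le_mul_left (by exact_mod_cast Finset.card_filter_le T _) _

end Field

end Polynomial

theorem MvPolynomial.natDegree_eval_le {R σ : Type*} [CommSemiring R]
    (h : MvPolynomial σ R[X]) {b : σ → R[X]} {m : ℕ} (hb : ∀ i, (b i).natDegree ≤ m) :
    (MvPolynomial.eval b h).natDegree ≤
      h.support.sup (fun e => (h.coeff e).natDegree) + h.totalDegree * m := by
  rw [MvPolynomial.eval_eq]
  refine natDegree_sum_le_of_forall_le _ _ fun e he => natDegree_mul_le.trans
    (add_le_add (Finset.le_sup (f := fun e => (h.coeff e).natDegree) he) ?_)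
  calc (∏ i ∈ e.support, b i ^ e i).natDegree ≤ ∑ i ∈ e.support, (b i ^ e i).natDegree :=
        natDegree_prod_le _ _
    _ ≤ ∑ i ∈ e.support, e i * m :=
        Finset.sum_le_sum fun i _ => natDegree_pow_le.trans (Nat.mul_le_mul_left _ (hb i))
    _ = (∑ i ∈ e.support, e i) * m := by rw [Finset.sum_mul]
    _ ≤ h.totalDegree * m := Nat.mul_le_mul_right _ (MvPolynomial.le_totalDegree he)

theorem pow_div_add_one_mul_le_rpow {q : ℝ} (hq : 1 ≤ q) (n p N : ℕ) :
    q ^ ((n / p + 1) * N) ≤ q ^ N * q ^ ((n : ℝ) * N / p) := by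
  rw [add_mul, one_mul, pow_add, mul_comm, ← Real.rpow_natCast q (n / p * N)]
  refine mul_le_mul_of_nonneg_left (Real.rpow_le_rpow_of_exponent_le hq ?_) (by positivity)
  push_cast
  rw [mul_div_right_comm]
  gcongr
  exact Nat.cast_div_le

def separatedSet {F : Type*} [Field F] (p N : ℕ) (f : MvPolynomial (Fin (N + 1)) F[X])
    (g : MvPolynomial (Fin N) F[X]) (n : ℕ) : Set (Fin (N + 1) → F[X]) :=
  {a | (∀ i, (a i).natDegree ≤ n / p) ∧
    ∃ P : F[X], IsPrimePoly P ∧ n < 2 * P.natDegree ∧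
      P ∣ MvPolynomial.eval a f ∧
      P ∣ MvPolynomial.eval (a ∘ Fin.succ) g ∧
      ¬ P ∣ MvPolynomial.eval (a ∘ Fin.succ) ((MvPolynomial.finSuccEquiv F[X] N f).leadingCoeff) ∧
      MvPolynomial.eval (a ∘ Fin.succ) g ≠ 0}

theorem ncard_separatedSet_fiber_le {F : Type*} [Field F] {p N n : ℕ} (hn : 2 * (n / p) ≤ n)
    (f : MvPolynomial (Fin (N + 1)) F[X]) (g : MvPolynomial (Fin N) F[X])
    {b : Fin N → F[X]} (hb : ∀ i, (b i).natDegree ≤ n / p) :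
    (separatedSet p N f g n ∩ (· ∘ Fin.succ) ⁻¹' {b}).ncard ≤
      (g.support.sup (fun e => (g.coeff e).natDegree) + g.totalDegree) *
        (MvPolynomial.finSuccEquiv F[X] N f).natDegree := by
  classical
  set φ := MvPolynomial.finSuccEquiv F[X] N f
  have hcons : ∀ a ∈ (· ∘ Fin.succ) ⁻¹' {b}, a = Fin.cons (a 0) b := by
    rintro a rfl
    exact (Fin.cons_self_tail a).symm
  by_cases hG : MvPolynomial.eval b g = 0
  · have hempty : separatedSet p N f g n ∩ (· ∘ Fin.succ) ⁻¹' {b} = ∅ := by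
      refine Set.eq_empty_of_forall_notMem ?_
      rintro a ⟨⟨-, -, -, -, -, -, -, hne⟩, rfl⟩
      exact hne hG
    simp [hempty]
  have hmaps : Set.MapsTo (· 0) (separatedSet p N f g n ∩ (· ∘ Fin.succ) ⁻¹' {b})
      {x | x.natDegree ≤ n / p ∧ ∃ P, IsPrimePoly P ∧ n / p < P.natDegree ∧
        P ∣ MvPolynomial.eval b g ∧ ¬ P ∣ (φ.map (MvPolynomial.eval b)).coeff φ.natDegree ∧
        P ∣ (φ.map (MvPolynomial.eval b)).eval x} := by
    rintro a ⟨⟨ha, P, hP, hnP, hPf, hPg, hPc, -⟩, hab⟩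
    rw [hcons a hab, MvPolynomial.eval_eq_eval_mv_eval'] at hPf
    obtain rfl : a ∘ Fin.succ = b := hab
    exact ⟨ha 0, P, hP, by omega, hPg, by rwa [coeff_map], hPf⟩
  have hinj : Set.InjOn (· 0) (separatedSet p N f g n ∩ (· ∘ Fin.succ) ⁻¹' {b}) :=
    fun a ha a' ha' h0 => by rw [hcons a ha.2, hcons a' ha'.2, show a 0 = a' 0 from h0]
  have hcard := card_filter_normalizedFactors_mul_le hG (n / p)
  have hdegG := MvPolynomial.natDegree_eval_le g hb
  rw [← ENat.natCast_le_natCast]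
  calc _ ≤ (separatedSet p N f g n ∩ (· ∘ Fin.succ) ⁻¹' {b}).encard := Set.ncard_le_encard _
    _ ≤ _ := Set.encard_le_encard_of_injOn hmaps hinj
    _ ≤ _ := encard_setOf_exists_prime_dvd_eval_le hG natDegree_map_le (n / p)
    _ ≤ _ := by
        gcongr
        refine Nat.le_of_mul_le_mul_right (hcard.trans (hdegG.trans ?_)) (Nat.succ_pos _)
        rw [add_mul, mul_add_one, mul_add_one]
        omega

/-- Let `𝔽_q` have characteristic `p`, let `f ∈ 𝔽_q[t][x₀,x_1,…,x_N]`
(`N + 1 ≥ 1` variables, with `x₀` the distinguished variable), let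
`g ∈ 𝔽_q[t][x_1,…,x_N]`, and let `f₁ ∈ 𝔽_q[t][x_1,…,x_N]` be the coefficient of the
highest power of the distinguished variable in `f`. Let `S(n)` be the set of tuples
`a ∈ 𝔽_q[t]^{N+1}` with `deg a_i ≤ ⌊n/p⌋` for all `i` for which there is a prime `P` with
`deg P > n/2`, `P ∣ f(a)`, `P ∣ g(a_1,…,a_N)`, `P ∤ f₁(a_1,…,a_N)` and
`g(a_1,…,a_N) ≠ 0`. Then `|S(n)| ≤ C·q^{nN/p}` for a constant `C` depending only on
`f, g, q`. -/
theorem separated_variable_estimate {F : Type*} [Field F] [Fintype F] (p : ℕ) [CharP F p]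
    (N : ℕ) (f : MvPolynomial (Fin (N + 1)) (Polynomial F))
    (g : MvPolynomial (Fin N) (Polynomial F)) :
    ∃ C : ℝ, ∀ n : ℕ, 1 ≤ n →
      ({a : Fin (N + 1) → Polynomial F | (∀ i, (a i).natDegree ≤ n / p) ∧
          ∃ P : Polynomial F, IsPrimePoly P ∧ n < 2 * P.natDegree ∧
            P ∣ MvPolynomial.eval a f ∧
            P ∣ MvPolynomial.eval (a ∘ Fin.succ) g ∧
            ¬ P ∣ MvPolynomial.eval (a ∘ Fin.succ)
                ((MvPolynomial.finSuccEquiv (Polynomial F) N f).leadingCoeff) ∧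
            MvPolynomial.eval (a ∘ Fin.succ) g ≠ 0}.ncard : ℝ) ≤
        C * (Fintype.card F : ℝ) ^ ((n : ℝ) * (N : ℝ) / p) := by
  set k := (g.support.sup (fun e => (g.coeff e).natDegree) + g.totalDegree) *
    (MvPolynomial.finSuccEquiv F[X] N f).natDegree
  refine ⟨k * (Fintype.card F : ℝ) ^ N, fun n _ => ?_⟩
  have hn : 2 * (n / p) ≤ n := by
    have := Nat.div_mul_le_self n p
    nlinarith [(CharP.char_is_prime F p).two_le]
  have hS : (separatedSet p N f g n).ncard ≤ k * Fintype.card F ^ ((n / p + 1) * N) := by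
    refine (Set.ncard_le_mul_ncard_of_mapsTo (fun a ha i => ha.1 i.succ)
      (Set.Finite.pi' fun _ => finite_setOf_natDegree_le_s16 (n / p))
      fun b hb => ncard_separatedSet_fiber_le hn f g hb).trans ?_
    simpa using Nat.mul_le_mul_left k
      (ncard_setOf_forall_natDegree_le_le (R := F) (ι := Fin N) (n / p))
  calc _ ≤ (k : ℝ) * (Fintype.card F : ℝ) ^ ((n / p + 1) * N) := by exact_mod_cast hS
    _ ≤ _ := by
        rw [mul_assoc]
        gcongr
        exact pow_div_add_one_mul_le_rpow (by exact_mod_cast Fintype.card_pos) n p N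
end
end
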